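/- arXiv:1703.02515 — 5 statements merged into one kernel-verified Lean document; each statement's English description precedes it below -/
import Mathlib

section
/- Assume u := 1 + b₂² + ⋯ + b_n² is a unit of ZMod N. Then for every x ∈ (ZMod N)^n there exists a unique y ∈ D_N such that x + y ∈ L_N; equivalently, (ZMod N)^n is the internal direct sum of the subgroups L_N and D_N. Moreover, the unique such y equals a·g where a = −u⁻¹·(x₁ − (b₂x₂ + ⋯ + b_n x_n)). -/
/-- The finite SysNF lattice group
`L_N = {x ∈ (ZMod N)^(n+1) : x 0 = ∑_{i ≠ 0} b i * x i}`
as an additive subgroup of `(ZMod N)^(n+1)`. -/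
def LN (n N : ℕ) (b : Fin (n + 1) → ZMod N) : AddSubgroup (Fin (n + 1) → ZMod N) where
  carrier := {x | x 0 = ∑ i ∈ Finset.univ.erase 0, b i * x i}
  zero_mem' := by simp
  add_mem' := by
    intro x y hx hy
    simp only [Set.mem_setOf_eq, Pi.add_apply] at *
    rw [hx, hy, ← Finset.sum_add_distrib]
    exact Finset.sum_congr rfl fun i _ => (mul_add _ _ _).symm
  neg_mem' := by
    intro x hx
    simp only [Set.mem_setOf_eq, Pi.neg_apply] at *
    rw [hx, ← Finset.sum_neg_distrib]
    exact Finset.sum_congr rfl fun i _ => (mul_neg _ _).symm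

/-- The reduced dual group
`D_N = {y ∈ (ZMod N)^(n+1) : y i = -b i * y 0 for all i ≠ 0}`
as an additive subgroup of `(ZMod N)^(n+1)`. -/
def DN (n N : ℕ) (b : Fin (n + 1) → ZMod N) : AddSubgroup (Fin (n + 1) → ZMod N) where
  carrier := {y | ∀ i, i ≠ 0 → y i = -b i * y 0}
  zero_mem' := by intro i hi; simp
  add_mem' := by
    intro x y hx hy i hi
    simp only [Pi.add_apply]
    rw [hx i hi, hy i hi, mul_add]
  neg_mem' := by
    intro x hx i hi
    simp only [Pi.neg_apply]
    rw [hx i hi, mul_neg]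

/-- Assume `u = 1 + ∑_{i ≠ 0} (b i)²` is a unit of `ZMod N`.  Then for every
`x ∈ (ZMod N)^(n+1)` there exists a unique `y ∈ D_N` such that `x + y ∈ L_N`;
equivalently, `(ZMod N)^(n+1)` is the internal direct sum of `L_N` and `D_N`
(`IsCompl (LN n N b) (DN n N b)`).  Moreover, the unique such `y` equals `a • g` where
`g = (1, -b₂, …, -bₙ)` and `a = -u⁻¹ * (x₁ - ∑_{i ≠ 0} b i * x i)`. -/
theorem stmt_3 (n N : ℕ) (hN : 1 ≤ N) (b : Fin (n + 1) → ZMod N)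
    (hu : IsUnit (1 + ∑ i ∈ Finset.univ.erase 0, b i ^ 2)) :
    (∀ x : Fin (n + 1) → ZMod N, ∃! y : Fin (n + 1) → ZMod N,
      y ∈ DN n N b ∧ x + y ∈ LN n N b) ∧
    IsCompl (LN n N b) (DN n N b) ∧
    (∀ x : Fin (n + 1) → ZMod N, ∀ y : Fin (n + 1) → ZMod N,
      y ∈ DN n N b → x + y ∈ LN n N b →
        y = (-(1 + ∑ i ∈ Finset.univ.erase 0, b i ^ 2)⁻¹ *
              (x 0 - ∑ i ∈ Finset.univ.erase 0, b i * x i)) •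
            (fun i => if i = 0 then 1 else -b i)) := by

  classical
  set u := 1 + ∑ i ∈ Finset.univ.erase 0, b i ^ 2 with hu_def
  set g : Fin (n + 1) → ZMod N := fun i => if i = 0 then 1 else -b i with hg_def
  have hg0 : g 0 = 1 := by simp [hg_def]
  have hginv : u * u⁻¹ = 1 := ZMod.mul_inv_of_unit _ hu
  have hmemD : ∀ y : Fin (n + 1) → ZMod N,
      y ∈ DN n N b ↔ ∀ i, i ≠ 0 → y i = -b i * y 0 := fun y => Iff.rfl
  have hmemL : ∀ x : Fin (n + 1) → ZMod N,
      x ∈ LN n N b ↔ x 0 = ∑ i ∈ Finset.univ.erase 0, b i * x i := fun x => Iff.rfl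
  have hDg : ∀ a : ZMod N, a • g ∈ DN n N b := by
    intro a i hi
    simp only [Pi.smul_apply, hg_def, if_neg hi, if_pos, if_true, eq_self_iff_true,
      smul_eq_mul, mul_one]
    ring
  have key : ∀ x y : Fin (n + 1) → ZMod N, y ∈ DN n N b →
      (x + y ∈ LN n N b ↔
        u * y 0 = (∑ i ∈ Finset.univ.erase 0, b i * x i) - x 0) := by
    intro x y hy
    rw [hmemL]
    have hsum : ∑ i ∈ Finset.univ.erase 0, b i * (x + y) i
        = (∑ i ∈ Finset.univ.erase 0, b i * x i)
          - (∑ i ∈ Finset.univ.erase 0, b i ^ 2) * y 0 := by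
      rw [Finset.sum_mul, ← Finset.sum_sub_distrib]
      refine Finset.sum_congr rfl fun i hi => ?_
      have hi0 : i ≠ 0 := Finset.ne_of_mem_erase hi
      simp only [Pi.add_apply]
      rw [(hmemD y).1 hy i hi0]
      ring
    simp only [Pi.add_apply] at hsum ⊢
    rw [hsum]
    constructor <;> intro h <;> [linear_combination h; linear_combination h]
  have keyY : ∀ x y : Fin (n + 1) → ZMod N, y ∈ DN n N b → x + y ∈ LN n N b →
      y = (-(u⁻¹) * (x 0 - ∑ i ∈ Finset.univ.erase 0, b i * x i)) • g := by
    intro x y hy hxy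
    have h := (key x y hy).1 hxy
    have h0 : y 0 = -(u⁻¹) * (x 0 - ∑ i ∈ Finset.univ.erase 0, b i * x i) := by
      have := congrArg (fun t => u⁻¹ * t) h
      rw [← mul_assoc, mul_comm u⁻¹ u, hginv, one_mul] at this
      rw [this]; ring
    funext i
    by_cases hi : i = 0
    · subst hi
      simp only [Pi.smul_apply, hg0, smul_eq_mul, mul_one]
      exact h0
    · rw [(hmemD y).1 hy i hi, h0]
      simp only [Pi.smul_apply, hg_def, if_neg hi, smul_eq_mul]
      ring
  have hExu : ∀ x : Fin (n + 1) → ZMod N, ∃! y : Fin (n + 1) → ZMod N,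
      y ∈ DN n N b ∧ x + y ∈ LN n N b := by
    intro x
    refine ⟨(-(u⁻¹) * (x 0 - ∑ i ∈ Finset.univ.erase 0, b i * x i)) • g,
      ⟨hDg _, ?_⟩, fun y hy => keyY x y hy.1 hy.2⟩
    rw [key x _ (hDg _)]
    simp only [Pi.smul_apply, hg0, smul_eq_mul, mul_one]
    calc u * (-(u⁻¹) * (x 0 - ∑ i ∈ Finset.univ.erase 0, b i * x i))
        = (u * u⁻¹) * ((∑ i ∈ Finset.univ.erase 0, b i * x i) - x 0) := by ring
      _ = _ := by rw [hginv, one_mul]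
  refine ⟨hExu, ⟨?_, ?_⟩, fun x y hy hxy => keyY x y hy hxy⟩
  · rw [disjoint_iff_inf_le]
    intro z hz
    have hzL : z ∈ LN n N b := hz.1
    have hzD : z ∈ DN n N b := hz.2
    have h : (0 : Fin (n + 1) → ZMod N) + z ∈ LN n N b := by
      rwa [zero_add]
    have h0 := keyY 0 z hzD h
    simp only [Pi.zero_apply, mul_zero, Finset.sum_const_zero, sub_zero, mul_zero,
      zero_smul] at h0
    simp [h0]
  · rw [codisjoint_iff_le_sup]
    intro x _
    obtain ⟨y, ⟨hyD, hyL⟩, -⟩ := hExu x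
    rw [AddSubgroup.mem_sup]
    exact ⟨x + y, hyL, -y, AddSubgroup.neg_mem _ hyD, by abel⟩
end

section
/- Assume u := 1 + b₂² + ⋯ + b_n² is a unit of ZMod N. Then the map ψ : L_N → (ZMod N)^{n−1} defined by ψ(x) = (x₂ + b₂x₁, x₃ + b₃x₁, …, x_n + b_n x₁) is an additive group isomorphism (a bijective additive homomorphism). -/
open Finset

lemma sum_univ_erase_eq_sum_subtype_ne {ι M : Type*} [Fintype ι] [DecidableEq ι]
    [AddCommMonoid M] (a : ι) (f : ι → M) :
    ∑ i ∈ univ.erase a, f i = ∑ i : {i // i ≠ a}, f i :=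
  sum_subtype _ (fun _ => by simp) f

section
variable {ι R : Type*} [Fintype ι] [DecidableEq ι] [CommRing R] (a : ι) (b : ι → R)

def psi : (ι → R) →+ ({i // i ≠ a} → R) where
  toFun x i := x i + b i * x a
  map_zero' := by ext; simp
  map_add' x y := by ext; simp only [Pi.add_apply]; ring

lemma sum_mul_psi {x : ι → R} (hx : x a = ∑ i ∈ univ.erase a, b i * x i) :
    ∑ i : {i // i ≠ a}, b i * psi a b x i = (1 + ∑ i ∈ univ.erase a, b i ^ 2) * x a := by
  simp only [psi, AddMonoidHom.coe_mk, ZeroHom.coe_mk, mul_add, sum_add_distrib,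
    sum_univ_erase_eq_sum_subtype_ne] at hx ⊢
  rw [← hx, add_mul, one_mul, sum_mul]
  congr 1
  exact sum_congr rfl fun i _ => by ring

noncomputable def psiInv (y : {i // i ≠ a} → R) : ι → R :=
  let c := Ring.inverse (1 + ∑ i ∈ univ.erase a, b i ^ 2) * ∑ i : {i // i ≠ a}, b i * y i
  fun j => if h : j = a then c else y ⟨j, h⟩ - b j * c

lemma psiInv_apply_self (y : {i // i ≠ a} → R) :
    psiInv a b y a =
      Ring.inverse (1 + ∑ i ∈ univ.erase a, b i ^ 2) * ∑ i : {i // i ≠ a}, b i * y i := by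
  simp [psiInv]

lemma psiInv_apply_of_ne (y : {i // i ≠ a} → R) {j : ι} (h : j ≠ a) :
    psiInv a b y j = y ⟨j, h⟩ - b j * psiInv a b y a := by
  simp [psiInv, h]

lemma psi_psiInv (y : {i // i ≠ a} → R) : psi a b (psiInv a b y) = y := by
  ext i
  simp [psi, psiInv_apply_of_ne a b y i.2]

variable {a b}

lemma psiInv_apply_self_eq_sum (hu : IsUnit (1 + ∑ i ∈ univ.erase a, b i ^ 2))
    (y : {i // i ≠ a} → R) :
    psiInv a b y a = ∑ i ∈ univ.erase a, b i * psiInv a b y i := by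
  have hc : (1 + ∑ i ∈ univ.erase a, b i ^ 2) * psiInv a b y a =
      ∑ i : {i // i ≠ a}, b i * y i := by
    rw [psiInv_apply_self, ← mul_assoc, Ring.mul_inverse_cancel _ hu, one_mul]
  have hsum : ∑ i : {i // i ≠ a}, b i * psiInv a b y i =
      ∑ i : {i // i ≠ a}, b i * y i - (∑ i ∈ univ.erase a, b i ^ 2) * psiInv a b y a := by
    rw [sum_univ_erase_eq_sum_subtype_ne, sum_mul, ← sum_sub_distrib]
    exact sum_congr rfl fun i _ => by rw [psiInv_apply_of_ne a b y i.2]; ring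
  rw [sum_univ_erase_eq_sum_subtype_ne, hsum, ← hc]
  ring

lemma psiInv_psi (hu : IsUnit (1 + ∑ i ∈ univ.erase a, b i ^ 2)) {x : ι → R}
    (hx : x a = ∑ i ∈ univ.erase a, b i * x i) : psiInv a b (psi a b x) = x := by
  have hxa : psiInv a b (psi a b x) a = x a := by
    rw [psiInv_apply_self, sum_mul_psi a b hx, ← mul_assoc, Ring.inverse_mul_cancel _ hu,
      one_mul]
  ext j
  by_cases h : j = a
  · subst h; exact hxa
  · rw [psiInv_apply_of_ne a b _ h, hxa]; simp [psi]
end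

theorem stmt_6_general (n N : ℕ) (b : Fin (n + 1) → ZMod N)
    (hu : IsUnit (1 + ∑ i ∈ Finset.univ.erase 0, b i ^ 2)) :
    ∃ ψ : LN n N b ≃+ ({i : Fin (n + 1) // i ≠ 0} → ZMod N),
      ∀ (x : LN n N b) (i : {i : Fin (n + 1) // i ≠ 0}),
        ψ x i = (x : Fin (n + 1) → ZMod N) i.1 +
          b i.1 * (x : Fin (n + 1) → ZMod N) 0 :=
  ⟨{ toFun x := psi 0 b x.1
     invFun y := ⟨psiInv 0 b y, psiInv_apply_self_eq_sum hu y⟩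
     left_inv x := Subtype.ext (psiInv_psi hu x.2)
     right_inv := psi_psiInv 0 b
     map_add' x y := map_add (psi 0 b) x.1 y.1 }, fun _ _ => rfl⟩

/-- Assume `u = 1 + ∑_{i ≠ 0} (b i)²` is a unit of `ZMod N`.  Then the map
`ψ : L_N → (ZMod N)^{n-1}` (coordinates indexed by `{i : Fin (n+1) // i ≠ 0}`) given by
`ψ(x) i = x i + b i * x 0` is an additive group isomorphism. -/
theorem stmt_6 (n N : ℕ) (hN : 1 ≤ N) (b : Fin (n + 1) → ZMod N)
    (hu : IsUnit (1 + ∑ i ∈ Finset.univ.erase 0, b i ^ 2)) :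
    ∃ ψ : LN n N b ≃+ ({i : Fin (n + 1) // i ≠ 0} → ZMod N),
      ∀ (x : LN n N b) (i : {i : Fin (n + 1) // i ≠ 0}),
        ψ x i = (x : Fin (n + 1) → ZMod N) i.1 +
          b i.1 * (x : Fin (n + 1) → ZMod N) 0 :=
  stmt_6_general n N b hu
end

section
/- Assume u := 1 + b₂² + ⋯ + b_n² is a unit of ZMod N. For each x ∈ L_N, the function χ_x : L_N → ℂ given by χ_x(z) := e(−⟨x,z⟩) is an additive character of L_N (i.e., χ_x(z + z') = χ_x(z)·χ_x(z') and χ_x(0) = 1), and the map x ↦ χ_x is a bijection from L_N onto the group of all additive characters L_N → ℂ. Thus the χ_x form a complete set of inequivalent irreducible characters of the finite abelian group L_N. -/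
/-- The additive character `e : ZMod N → ℂ`, `e c = exp(2πi · c.val / N)`. -/
noncomputable def eChar (N : ℕ) (c : ZMod N) : ℂ :=
  Complex.exp (2 * Real.pi * Complex.I * (c.val : ℂ) / (N : ℂ))

noncomputable def psiN (N : ℕ) [NeZero N] : AddChar (ZMod N) ℂ :=
  AddChar.zmodChar N (by
    rw [← Complex.exp_nat_mul]
    rw [mul_div_cancel₀ _ (by exact_mod_cast (NeZero.ne N) : (N:ℂ) ≠ 0)]
    exact Complex.exp_two_pi_mul_I)

lemma psiN_eq (N : ℕ) [NeZero N] (c : ZMod N) : psiN N c = eChar N c := by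
  rw [psiN, eChar, AddChar.zmodChar_apply, ← Complex.exp_nat_mul]
  ring_nf

lemma psiN_inj (N : ℕ) [NeZero N] : Function.Injective (psiN N) := by
  have hprim := Complex.isPrimitiveRoot_exp N (NeZero.ne N)
  intro a c h
  rw [psiN, AddChar.zmodChar_apply, AddChar.zmodChar_apply] at h
  exact ZMod.val_injective N (hprim.pow_inj (ZMod.val_lt a) (ZMod.val_lt c) h)

/-- the pairing as an AddMonoidHom in the second variable -/
def pairHom (n N : ℕ) (b : Fin (n + 1) → ZMod N) (x : Fin (n + 1) → ZMod N) :
    (LN n N b) →+ ZMod N where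
  toFun z := -∑ i, x i * (z : Fin (n + 1) → ZMod N) i
  map_zero' := by simp
  map_add' z w := by
    push_cast
    simp only [AddSubgroup.coe_add, Pi.add_apply, mul_add, Finset.sum_add_distrib]
    ring

/-- basis vectors of LN -/
def vvec (n N : ℕ) (b : Fin (n + 1) → ZMod N) (j : Fin (n + 1)) :
    Fin (n + 1) → ZMod N :=
  fun i => if i = 0 then b j else if i = j then 1 else 0

lemma vvec_mem (n N : ℕ) (b : Fin (n + 1) → ZMod N) (j : Fin (n + 1)) (hj : j ≠ 0) :
    vvec n N b j ∈ LN n N b := by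
  show vvec n N b j 0 = ∑ i ∈ Finset.univ.erase 0, b i * vvec n N b j i
  rw [Finset.sum_eq_single_of_mem j (Finset.mem_erase.2 ⟨hj, Finset.mem_univ j⟩)]
  · simp [vvec, hj]
  · intro i _ hij
    rcases Finset.mem_erase.1 ‹i ∈ Finset.univ.erase 0› with ⟨hi0, _⟩
    simp [vvec, hi0, hij]

lemma pair_vvec (n N : ℕ) (b : Fin (n + 1) → ZMod N) (d : Fin (n + 1) → ZMod N)
    (j : Fin (n + 1)) (hj : j ≠ 0) :
    ∑ i, d i * vvec n N b j i = d 0 * b j + d j := by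
  rw [← Finset.add_sum_erase _ (fun i => d i * vvec n N b j i) (Finset.mem_univ 0),
    Finset.sum_eq_single_of_mem j (Finset.mem_erase.2 ⟨hj, Finset.mem_univ j⟩)
      (fun i hi hij => by
        rcases Finset.mem_erase.1 hi with ⟨hi0, _⟩
        simp [vvec, hi0, hij])]
  simp [vvec, hj]

lemma key (n N : ℕ) (b : Fin (n + 1) → ZMod N)
    (hu : IsUnit (1 + ∑ i ∈ Finset.univ.erase 0, b i ^ 2))
    (d : Fin (n + 1) → ZMod N) (hd : d ∈ LN n N b)
    (h : ∀ z : LN n N b, ∑ i, d i * (z : Fin (n + 1) → ZMod N) i = 0) :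
    d = 0 := by
  have hdj : ∀ j : Fin (n + 1), j ≠ 0 → d j = -(d 0 * b j) := by
    intro j hj
    have := h ⟨vvec n N b j, vvec_mem n N b j hj⟩
    rw [pair_vvec n N b d j hj] at this
    linear_combination this
  have hd0 : d 0 = ∑ i ∈ Finset.univ.erase 0, b i * d i := hd
  have e1 : ∑ i ∈ Finset.univ.erase 0, b i * d i
      = -(d 0 * ∑ i ∈ Finset.univ.erase 0, b i ^ 2) := by
    rw [Finset.mul_sum, ← Finset.sum_neg_distrib]
    refine Finset.sum_congr rfl fun i hi => ?_
    rw [hdj i (Finset.mem_erase.1 hi).1]; ring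
  have hd02 := hd0.trans e1
  have hsum : d 0 * (1 + ∑ i ∈ Finset.univ.erase 0, b i ^ 2) = 0 := by
    linear_combination hd02
  obtain ⟨w, hw⟩ := hu.exists_right_inv
  have h0 : d 0 = 0 := by
    calc d 0 = d 0 * ((1 + ∑ i ∈ Finset.univ.erase 0, b i ^ 2) * w) := by
          rw [hw, mul_one]
      _ = (d 0 * (1 + ∑ i ∈ Finset.univ.erase 0, b i ^ 2)) * w := by ring
      _ = 0 := by rw [hsum, zero_mul]
  funext i
  by_cases hi : i = 0
  · simpa [hi] using h0
  · simp [hdj i hi, h0]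

/-- Assume `u = 1 + ∑_{i ≠ 0} (b i)²` is a unit of `ZMod N`.  For each
`x ∈ L_N`, the function `χ_x : L_N → ℂ`, `χ_x(z) = e(-⟨x, z⟩)`, is an additive character
of `L_N` (an `AddChar (LN n N b) ℂ`, i.e. `χ_x(z + z') = χ_x(z)·χ_x(z')` and
`χ_x(0) = 1`), and `x ↦ χ_x` is a bijection from `L_N` onto the group of all additive
characters `L_N → ℂ`; thus the `χ_x` form a complete set of inequivalent irreducible
characters of the finite abelian group `L_N`. -/
theorem stmt_11 (n N : ℕ) [NeZero N] (b : Fin (n + 1) → ZMod N)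
    (hu : IsUnit (1 + ∑ i ∈ Finset.univ.erase 0, b i ^ 2)) :
    ∃ Χ : (LN n N b) → AddChar (LN n N b) ℂ,
      (∀ x z : LN n N b,
        Χ x z = eChar N (-∑ i, (x : Fin (n + 1) → ZMod N) i *
          (z : Fin (n + 1) → ZMod N) i)) ∧
      Function.Bijective Χ := by
  classical
  refine ⟨fun x => (psiN N).compAddMonoidHom (pairHom n N b (x : Fin (n+1) → ZMod N)),
    fun x z => psiN_eq N _, ?_⟩
  have hinj : Function.Injective
      (fun x : LN n N b =>
        (psiN N).compAddMonoidHom (pairHom n N b (x : Fin (n+1) → ZMod N))) := by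
    intro x y hxy
    have hz : ∀ z : LN n N b,
        ∑ i, ((x : Fin (n+1) → ZMod N) - y) i * (z : Fin (n+1) → ZMod N) i = 0 := by
      intro z
      have h1 : psiN N (-∑ i, (x : Fin (n+1) → ZMod N) i * (z : Fin (n+1) → ZMod N) i)
          = psiN N (-∑ i, (y : Fin (n+1) → ZMod N) i * (z : Fin (n+1) → ZMod N) i) :=
        DFunLike.congr_fun hxy z
      have h2 := psiN_inj N h1
      have h3 : ∑ i, (x : Fin (n+1) → ZMod N) i * (z : Fin (n+1) → ZMod N) i
          = ∑ i, (y : Fin (n+1) → ZMod N) i * (z : Fin (n+1) → ZMod N) i :=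
        neg_injective h2
      simp only [Pi.sub_apply, sub_mul, Finset.sum_sub_distrib]
      rw [h3, sub_self]
    have hmem : (x : Fin (n+1) → ZMod N) - y ∈ LN n N b :=
      sub_mem x.2 y.2
    have := key n N b hu _ hmem hz
    exact Subtype.ext (sub_eq_zero.1 this)
  haveI : Fintype (LN n N b) := Fintype.ofFinite _
  rw [Fintype.bijective_iff_injective_and_card]
  exact ⟨hinj, (AddChar.card_eq).symm⟩
end

section
/- For every function f : (ZMod N)^n → ℂ and every x ∈ (ZMod N)^n, the DFT of the restriction of f to L_N is the D_N-periodization of the full DFT of f: ∑_{z ∈ L_N} f(z)·e(−⟨x,z⟩) = (1/N) · ∑_{y ∈ D_N} f̂(x − y), where f̂(w) := ∑_{z ∈ (ZMod N)^n} f(z)·e(−⟨w,z⟩). -/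
open Finset

theorem eChar_eq_stdAddChar (N : ℕ) [NeZero N] : eChar N = ZMod.stdAddChar := by
  funext c
  rw [ZMod.stdAddChar_apply, ZMod.toCircle_apply]
  rfl

section Poisson

variable {R ι : Type*} [CommRing R] [Fintype R] [DecidableEq R] [Fintype ι] [DecidableEq ι]
  {ψ : AddChar R ℂ}

theorem AddChar.ite_eq_zero_eq_sum_mulShift (hψ : ψ.IsPrimitive) (t : R) :
    (if t = 0 then 1 else 0 : ℂ) = (Fintype.card R : ℂ)⁻¹ * ∑ c : R, ψ (c * t) := by
  have hR : (Fintype.card R : ℂ) ≠ 0 := Nat.cast_ne_zero.mpr Fintype.card_ne_zero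
  rw [AddChar.sum_mulShift t hψ]
  split_ifs <;> simp [hR]

/-- Poisson summation for the hyperplane `a ⬝ᵥ z = 0`, whose dual is the line `R • a`. -/
theorem sum_dotProduct_eq_zero_eq_sum_smul (hψ : ψ.IsPrimitive) (a : ι → R)
    (f : (ι → R) → ℂ) (x : ι → R) :
    ∑ z with a ⬝ᵥ z = 0, f z * ψ (-(x ⬝ᵥ z)) =
      (Fintype.card R : ℂ)⁻¹ * ∑ c : R, ∑ z, f z * ψ (-((x - c • a) ⬝ᵥ z)) := by
  have hshift (c : R) (z : ι → R) :
      ψ (-((x - c • a) ⬝ᵥ z)) = ψ (-(x ⬝ᵥ z)) * ψ (c * (a ⬝ᵥ z)) := by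
    rw [← AddChar.map_add_eq_mul, sub_dotProduct, smul_dotProduct, smul_eq_mul]
    ring_nf
  calc ∑ z with a ⬝ᵥ z = 0, f z * ψ (-(x ⬝ᵥ z))
      = ∑ z, f z * ψ (-(x ⬝ᵥ z)) * (if a ⬝ᵥ z = 0 then 1 else 0) := by
        rw [sum_filter]
        exact sum_congr rfl fun z _ => by split_ifs <;> simp
    _ = (Fintype.card R : ℂ)⁻¹ * ∑ c : R, ∑ z, f z * ψ (-((x - c • a) ⬝ᵥ z)) := by
        simp_rw [AddChar.ite_eq_zero_eq_sum_mulShift hψ, hshift, mul_sum, sum_comm (γ := R)]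
        exact sum_congr rfl fun c _ => sum_congr rfl fun z _ => by ring

end Poisson

section SysNF

variable {R : Type*} [CommRing R] {n : ℕ}

def sysNFNormal (b : Fin (n + 1) → R) : Fin (n + 1) → R := Function.update (-b) 0 1

theorem sysNFNormal_dotProduct (b z : Fin (n + 1) → R) :
    sysNFNormal b ⬝ᵥ z = z 0 - ∑ i ∈ univ.erase 0, b i * z i := by
  rw [dotProduct, ← add_sum_erase _ _ (mem_univ 0), sub_eq_add_neg, ← sum_neg_distrib]
  congr 1
  · simp [sysNFNormal]
  · exact sum_congr rfl fun i hi => by simp [sysNFNormal, ne_of_mem_erase hi]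

theorem sum_sysNFDual_eq_sum_smul [Fintype R] [DecidableEq R] {M : Type*} [AddCommMonoid M]
    (b : Fin (n + 1) → R) (g : (Fin (n + 1) → R) → M) :
    ∑ y with ∀ i, i ≠ 0 → y i = -b i * y 0, g y = ∑ c : R, g (c • sysNFNormal b) := by
  have hsmul (y : Fin (n + 1) → R) (hy : ∀ i, i ≠ 0 → y i = -b i * y 0) :
      y 0 • sysNFNormal b = y := by
    funext i
    rcases eq_or_ne i 0 with rfl | hi
    · simp [sysNFNormal]
    · simp [sysNFNormal, hi, hy i hi, mul_comm]
  refine sum_nbij' (fun y => y 0) (fun c => c • sysNFNormal b) (by simp) ?_ ?_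
    (by simp [sysNFNormal]) ?_
  · intro c _
    refine mem_filter.mpr ⟨mem_univ _, fun i hi => ?_⟩
    simp [sysNFNormal, hi, mul_comm]
  · intro y hy
    exact hsmul y (mem_filter.mp hy).2
  · intro y hy
    rw [hsmul y (mem_filter.mp hy).2]

end SysNF

/-- For every `f : (ZMod N)^(n+1) → ℂ` and every `x`, the DFT of the
restriction of `f` to `L_N` is the `D_N`-periodization of the full DFT of `f`:
`∑_{z ∈ L_N} f(z)·e(-⟨x, z⟩) = (1/N) · ∑_{y ∈ D_N} f̂(x - y)`, where
`f̂(w) = ∑_{z ∈ (ZMod N)^(n+1)} f(z)·e(-⟨w, z⟩)`. -/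
theorem stmt_14 (n N : ℕ) [NeZero N] (b : Fin (n + 1) → ZMod N)
    (f : (Fin (n + 1) → ZMod N) → ℂ) (x : Fin (n + 1) → ZMod N) :
    ∑ z ∈ Finset.univ.filter
        (fun z : Fin (n + 1) → ZMod N => z 0 = ∑ i ∈ Finset.univ.erase 0, b i * z i),
        f z * eChar N (-∑ i, x i * z i) =
      (N : ℂ)⁻¹ *
        ∑ y ∈ Finset.univ.filter
          (fun y : Fin (n + 1) → ZMod N => ∀ i, i ≠ 0 → y i = -b i * y 0),
          ∑ z : Fin (n + 1) → ZMod N, f z * eChar N (-∑ i, (x i - y i) * z i) := by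
  have hL : (univ.filter fun z : Fin (n + 1) → ZMod N =>
      z 0 = ∑ i ∈ univ.erase 0, b i * z i) = univ.filter (sysNFNormal b ⬝ᵥ · = 0) := by
    simp_rw [sysNFNormal_dotProduct, sub_eq_zero]
  rw [hL, sum_sysNFDual_eq_sum_smul, eChar_eq_stdAddChar]
  have h := sum_dotProduct_eq_zero_eq_sum_smul (ZMod.isPrimitive_stdAddChar N) (sysNFNormal b) f x
  rwa [ZMod.card] at h
end

section
/- Let n ≥ 2 and let C ∈ ℤ^{n×n} be an upper Hessenberg integer matrix with unit subdiagonal: C(i+1, i) = 1 for all 1 ≤ i ≤ n−1, and C(i,j) = 0 whenever i ≥ j + 2. Then there exists a unimodular matrix M ∈ ℤ^{n×n} with det M = 1 such that for all rows i ≥ 2 of the product C·M: (C·M)(i, i−1) = 1 and (C·M)(i, j) = 0 for every j ≠ i−1. (That is, integer column operations can clear all of rows 2 through n of C except for the unit subdiagonal entries.) -/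
/-!
Shifting the rows of `C` up by one and appending the last standard basis row gives a matrix `B`
whose diagonal is the unit subdiagonal of `C` and which vanishes below it, i.e. an upper
unitriangular matrix. Hence `det B = 1` and `M = B⁻¹` is unimodular. Row `i ≥ 1` of `C` is row
`i - 1` of `B`, so row `i` of `C * B⁻¹` is row `i - 1` of `B * B⁻¹ = 1`.
-/

namespace Matrix

variable {ι R : Type*} [Fintype ι] [DecidableEq ι] [CommRing R]

theorem mul_nonsing_inv_apply_of_row_eq {B C : Matrix ι ι R} (hB : IsUnit B.det) {i k : ι}
    (hrow : ∀ l, C i l = B k l) (j : ι) : (C * B⁻¹) i j = (1 : Matrix ι ι R) k j := by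
  simp only [← mul_nonsing_inv B hB, mul_apply, hrow]

variable {m : ℕ}

def shiftRowsUp (C : Matrix (Fin (m + 1)) (Fin (m + 1)) R) : Matrix (Fin (m + 1)) (Fin (m + 1)) R :=
  of fun k j => if h : k = Fin.last m then (1 : Matrix _ _ R) k j else C (k.castPred h).succ j

theorem shiftRowsUp_castSucc (C : Matrix (Fin (m + 1)) (Fin (m + 1)) R) (k : Fin m)
    (j : Fin (m + 1)) : shiftRowsUp C k.castSucc j = C k.succ j := by
  simp [shiftRowsUp, Fin.castSucc_ne_last]

theorem shiftRowsUp_last (C : Matrix (Fin (m + 1)) (Fin (m + 1)) R) (j : Fin (m + 1)) :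
    shiftRowsUp C (Fin.last m) j = (1 : Matrix _ _ R) (Fin.last m) j := by
  rw [shiftRowsUp, of_apply, dif_pos rfl]

theorem isUpperTriangular_shiftRowsUp {C : Matrix (Fin (m + 1)) (Fin (m + 1)) R}
    (hlow : ∀ i j : Fin (m + 1), (j : ℕ) + 2 ≤ i → C i j = 0) :
    (shiftRowsUp C).IsUpperTriangular := by
  intro k j hjk
  induction k using Fin.lastCases with
  | last => rw [shiftRowsUp_last]; exact one_apply_ne (ne_of_gt hjk)
  | cast k =>
    rw [shiftRowsUp_castSucc]
    exact hlow _ _ (by simp only [id, Fin.lt_def, Fin.val_castSucc] at hjk; simp; omega)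

theorem shiftRowsUp_apply_self {C : Matrix (Fin (m + 1)) (Fin (m + 1)) R}
    (hsub : ∀ k : Fin m, C k.succ k.castSucc = 1) (k : Fin (m + 1)) : shiftRowsUp C k k = 1 := by
  induction k using Fin.lastCases with
  | last => simp [shiftRowsUp_last]
  | cast k => rw [shiftRowsUp_castSucc, hsub]

theorem det_shiftRowsUp {C : Matrix (Fin (m + 1)) (Fin (m + 1)) R}
    (hsub : ∀ k : Fin m, C k.succ k.castSucc = 1)
    (hlow : ∀ i j : Fin (m + 1), (j : ℕ) + 2 ≤ i → C i j = 0) :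
    (shiftRowsUp C).det = 1 := by
  rw [det_of_isUpperTriangular (isUpperTriangular_shiftRowsUp hlow)]
  simp [shiftRowsUp_apply_self hsub]

end Matrix

open Matrix

/-- Let the dimension be `n + 2 ≥ 2` and let `C` be an upper Hessenberg
integer matrix with unit subdiagonal: `C (i+1) i = 1` and `C i j = 0` whenever
`i ≥ j + 2` (0-indexed).  Then there exists a unimodular matrix `M` with `det M = 1`
such that in the product `C * M`, every row `i ≥ 1` is zero except for the unit
subdiagonal entry: `(C * M) i j = 1` if `i = j + 1` and `= 0` otherwise. -/
theorem stmt_15 (n : ℕ) (C : Matrix (Fin (n + 2)) (Fin (n + 2)) ℤ)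
    (hsub : ∀ i j : Fin (n + 2), (i : ℕ) = (j : ℕ) + 1 → C i j = 1)
    (hlow : ∀ i j : Fin (n + 2), (j : ℕ) + 2 ≤ (i : ℕ) → C i j = 0) :
    ∃ M : Matrix (Fin (n + 2)) (Fin (n + 2)) ℤ,
      M.det = 1 ∧
      ∀ i j : Fin (n + 2), 1 ≤ (i : ℕ) →
        (C * M) i j = if (i : ℕ) = (j : ℕ) + 1 then 1 else 0 := by
  have hdet : (shiftRowsUp C).det = 1 := det_shiftRowsUp (fun k => hsub _ _ (by simp)) hlow
  refine ⟨(shiftRowsUp C)⁻¹, by rw [det_nonsing_inv, hdet, Ring.inverse_one], fun i j hi => ?_⟩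
  obtain ⟨k, rfl⟩ : ∃ k : Fin (n + 1), k.succ = i := ⟨i.pred (by grind), Fin.succ_pred _ _⟩
  have hrow l : C k.succ l = shiftRowsUp C k.castSucc l := (shiftRowsUp_castSucc C k l).symm
  rw [mul_nonsing_inv_apply_of_row_eq (hdet ▸ isUnit_one) hrow, one_apply]
  simp [Fin.ext_iff]
end
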